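/- For any square matrices A, B, X (all n×n), σ(AX − XB) ≺_w 2 δ(A, B) · σ(X) entrywise after decreasing ordering; here δ(A,B) is defined by Σ_{i=1}^k δ_i(A,B) = min_{α∈ℂ} (‖A − αI‖_(k) + ‖B − αI‖_(k))/2. -/

import Mathlib

open scoped InnerProductSpace ComplexOrder Matrix

/-- Singular values of a square complex matrix (in some fixed order). -/
noncomputable def singVals {n : ℕ} (A : Matrix (Fin n) (Fin n) ℂ) : Fin n → ℝ :=
  fun i => Real.sqrt ((Matrix.posSemidef_conjTranspose_mul_self A).1.eigenvalues i)

/-- Sum of the `k` largest entries of a vector: supremum of sums over subsets of size `k`. -/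
noncomputable def sumK {n : ℕ} (f : Fin n → ℝ) (k : ℕ) : ℝ :=
  sSup {x | ∃ s : Finset (Fin n), s.card = k ∧ x = ∑ i ∈ s, f i}

/-- The Ky-Fan `k`-norm: sum of the `k` largest singular values. -/
noncomputable def kyFan {n : ℕ} (A : Matrix (Fin n) (Fin n) ℂ) (k : ℕ) : ℝ :=
  sumK (singVals A) k

/-- The `k`-th discrepancy norm, via its minimal characterization. -/
noncomputable def discNorm {n : ℕ} (A : Matrix (Fin n) (Fin n) ℂ) (k : ℕ) : ℝ :=
  sInf {x | ∃ α : ℂ, x = kyFan (A - α • 1) k}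

/-- The vector of discrepancy values. -/
noncomputable def discVals {n : ℕ} (A : Matrix (Fin n) (Fin n) ℂ) : Fin n → ℝ :=
  fun i => discNorm A (i.1 + 1) - discNorm A i.1

/-- Weak majorization of vectors. -/
def WeakMaj {n : ℕ} (f g : Fin n → ℝ) : Prop :=
  ∀ k : ℕ, sumK f k ≤ sumK g k

/-- Decreasing rearrangement of a vector. -/
noncomputable def sortDesc {n : ℕ} (f : Fin n → ℝ) : Fin n → ℝ :=
  fun i => f (Tuple.sort f i.rev)

/-- The joint discrepancy norm of a pair of matrices. -/
noncomputable def discNorm2 {n : ℕ} (A B : Matrix (Fin n) (Fin n) ℂ) (k : ℕ) : ℝ :=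
  sInf {x | ∃ α : ℂ, x = (kyFan (A - α • 1) k + kyFan (B - α • 1) k) / 2}

/-- The joint discrepancy values of a pair of matrices. -/
noncomputable def discVals2 {n : ℕ} (A B : Matrix (Fin n) (Fin n) ℂ) : Fin n → ℝ :=
  fun i => discNorm2 A B (i.1 + 1) - discNorm2 A B i.1

/-!
Let `X = ∑ⱼ sⱼ uⱼ vⱼ*` be a singular value decomposition and `y, z` the top `k` right and left
singular vectors of `AX - XB`, so that its Ky Fan `k`-norm is `∑_c Re ⟪z_c, (AX - XB) y_c⟫`.
Expanding `X` writes this as `∑ⱼ sⱼ Fⱼ`, and since `s` is decreasing and nonnegative, summation by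
parts reduces the claim to bounds on the prefix sums `∑_{j<r} Fⱼ`, the contribution of the rank-`r`
partial isometry `Pᵣ = ∑_{j<r} uⱼ vⱼ*`. As `A Pᵣ - Pᵣ B = (A - α) Pᵣ - Pᵣ (B - α)` for every `α`,
that prefix sum is at most `‖A - α‖_(m) + ‖B - α‖_(m)` with `m = min r k`, hence at most
`2 (δ₁ + ⋯ + δₘ)`. This rests on `∑_c Re ⟪z_c, M y_c⟫ ≤ ‖M‖_(m)` for Bessel families `y, z` of
`m` vectors, which follows from AM-GM against the singular value decomposition of `M`. Finally
`δ` is decreasing (the minimum of concave functions of `k` is concave), so `∑_{i<k} 2 δᵢ sᵢ` is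
the Ky Fan sum of the right-hand side.
-/

open Finset

section Summation

variable {n : ℕ}

theorem mul_sum_le_sum_mul_of_prefix_sum_nonneg {s H : Fin n → ℝ} (hs : Antitone s)
    (hH : ∀ r (hr : r ≤ n), 0 ≤ ∑ d : Fin r, H (Fin.castLE hr d)) {t : ℝ} (ht : ∀ j, t ≤ s j) :
    t * ∑ j, H j ≤ ∑ j, s j * H j := by
  induction n generalizing t with
  | zero => simp
  | succ n ih =>
    have hlast : ∀ j : Fin n, s (Fin.last n) ≤ s j.castSucc := fun j => hs (Fin.le_last _)
    have hrest := ih (s := s ∘ Fin.castSucc) (H := H ∘ Fin.castSucc)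
      (hs.comp_monotone Fin.strictMono_castSucc.monotone)
      (fun r hr => by simpa using hH r (hr.trans n.le_succ)) hlast
    have htotal : 0 ≤ ∑ j, H j := by simpa using hH (n + 1) le_rfl
    simp only [Fin.sum_univ_castSucc, Function.comp_apply] at hrest htotal ⊢
    nlinarith [ht (Fin.last n)]

theorem sum_mul_le_sum_mul_of_prefix_sum_le {s f g : Fin n → ℝ} (hs : Antitone s)
    (hs0 : ∀ j, 0 ≤ s j)
    (hfg : ∀ r (hr : r ≤ n), ∑ d : Fin r, f (Fin.castLE hr d) ≤ ∑ d : Fin r, g (Fin.castLE hr d)) :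
    ∑ j, s j * f j ≤ ∑ j, s j * g j := by
  have key := mul_sum_le_sum_mul_of_prefix_sum_nonneg hs (H := g - f)
    (fun r hr => by simpa [sum_sub_distrib] using hfg r hr) hs0
  simpa [mul_sub, sum_sub_distrib] using key

theorem sum_castLE_eq_sum_ite {M : Type*} [AddCommMonoid M] {m : ℕ} (hm : m ≤ n) (f : Fin n → M) :
    ∑ c : Fin m, f (Fin.castLE hm c) = ∑ j : Fin n, if (j : ℕ) < m then f j else 0 :=
  Fintype.sum_of_injective _ (Fin.castLE_injective hm) _ _
    (fun j hj => if_neg (by simpa [Fin.range_castLE] using hj)) (fun c => by simp)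

theorem sum_mul_le_sum_castLE {σ t : Fin n → ℝ} (hσ : Antitone σ) (hσ0 : ∀ j, 0 ≤ σ j)
    (ht0 : ∀ j, 0 ≤ t j) (ht1 : ∀ j, t j ≤ 1) {m : ℕ} (hm : m ≤ n) (ht : ∑ j, t j ≤ m) :
    ∑ j, σ j * t j ≤ ∑ c : Fin m, σ (Fin.castLE hm c) := by
  refine (sum_mul_le_sum_mul_of_prefix_sum_le (g := fun j => if (j : ℕ) < m then 1 else 0) hσ hσ0
    fun r hr => ?_).trans_eq (by simp [sum_castLE_eq_sum_ite hm])
  have hcount : ∑ d : Fin r, (if (d : ℕ) < m then (1 : ℝ) else 0) = min r m := by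
    simp [sum_boole, Fin.card_filter_val_lt]
  simp only [Fin.val_castLE, hcount, Nat.cast_min]
  refine le_min ?_ ?_
  · simpa using sum_le_sum fun d (_ : d ∈ univ) => ht1 (Fin.castLE hr d)
  · calc ∑ d : Fin r, t (Fin.castLE hr d) = ∑ j ∈ univ.map (Fin.castLEEmb hr), t j := by simp
      _ ≤ ∑ j, t j := sum_le_univ_sum_of_nonneg ht0
      _ ≤ m := ht

end Summation

section SumK

variable {n : ℕ}

theorem bddAbove_sumK_set (f : Fin n → ℝ) (k : ℕ) :
    BddAbove {x | ∃ s : Finset (Fin n), s.card = k ∧ x = ∑ i ∈ s, f i} :=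
  ((Set.finite_range fun s : Finset (Fin n) => ∑ i ∈ s, f i).subset
    (by rintro x ⟨s, -, rfl⟩; exact ⟨s, rfl⟩)).bddAbove

theorem le_sumK (f : Fin n → ℝ) {k : ℕ} {s : Finset (Fin n)} (hs : s.card = k) :
    ∑ i ∈ s, f i ≤ sumK f k :=
  le_csSup (bddAbove_sumK_set f k) ⟨s, hs, rfl⟩

theorem sumK_le {f : Fin n → ℝ} {k : ℕ} {c : ℝ} (hk : k ≤ n)
    (h : ∀ s : Finset (Fin n), s.card = k → ∑ i ∈ s, f i ≤ c) : sumK f k ≤ c := by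
  obtain ⟨s, -, hs⟩ := exists_subset_card_eq (s := (univ : Finset (Fin n))) (by simpa using hk)
  exact csSup_le ⟨_, s, hs, rfl⟩ (by rintro x ⟨s, hs, rfl⟩; exact h s hs)

theorem sumK_of_lt {f : Fin n → ℝ} {k : ℕ} (hk : n < k) : sumK f k = 0 := by
  have hempty : {x | ∃ s : Finset (Fin n), s.card = k ∧ x = ∑ i ∈ s, f i} = ∅ :=
    Set.eq_empty_of_forall_notMem fun x ⟨s, hs, _⟩ => by
      have := s.card_le_univ; simp at this; omega
  rw [sumK, hempty, Real.sSup_empty]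

theorem sumK_comp_perm (f : Fin n → ℝ) (e : Equiv.Perm (Fin n)) (k : ℕ) :
    sumK (f ∘ e) k = sumK f k := by
  unfold sumK
  congr 1
  ext x
  constructor
  · rintro ⟨s, hs, rfl⟩
    exact ⟨s.map e.toEmbedding, by simp [hs], by simp⟩
  · rintro ⟨s, hs, rfl⟩
    exact ⟨s.map e.symm.toEmbedding, by simp [hs], by simp⟩

theorem sumK_eq_sum_castLE {g : Fin n → ℝ} (hg : Antitone g) (hg0 : ∀ j, 0 ≤ g j) {k : ℕ}
    (hk : k ≤ n) : sumK g k = ∑ c : Fin k, g (Fin.castLE hk c) := by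
  refine le_antisymm (sumK_le hk fun s hs => ?_) ?_
  · have hind := sum_mul_le_sum_castLE hg hg0 (t := fun j => if j ∈ s then 1 else 0)
      (fun j => by split_ifs <;> norm_num) (fun j => by split_ifs <;> norm_num) hk
      (by simp [hs])
    simpa [mul_boole] using hind
  · simpa using le_sumK g (s := univ.map (Fin.castLEEmb hk)) (by simp)

theorem sortDesc_eq_comp (f : Fin n → ℝ) :
    sortDesc f = f ∘ (Fin.revPerm.trans (Tuple.sort f)) := by
  funext i
  simp [sortDesc, Fin.revPerm]

theorem antitone_sortDesc (f : Fin n → ℝ) : Antitone (sortDesc f) := fun i j hij => by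
  simpa [sortDesc] using Tuple.monotone_sort f (Fin.rev_le_rev.mpr hij)

theorem sortDesc_eq_self {f : Fin n → ℝ} (hf : Antitone f) : sortDesc f = f := by
  have hmono : Monotone (f ∘ (Fin.revPerm : Equiv.Perm (Fin n))) :=
    fun i j hij => hf (Fin.rev_le_rev.mpr hij)
  funext i
  simpa [sortDesc] using congrFun (Tuple.comp_sort_eq_comp_iff_monotone.mpr hmono).symm i.rev

theorem sumK_eq_sum_sortDesc {f : Fin n → ℝ} (hf0 : ∀ j, 0 ≤ f j) {k : ℕ} (hk : k ≤ n) :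
    sumK f k = ∑ c : Fin k, sortDesc f (Fin.castLE hk c) := by
  rw [← sumK_eq_sum_castLE (antitone_sortDesc f) (fun j => hf0 _) hk, sortDesc_eq_comp,
    sumK_comp_perm]

end SumK

section KyFan

variable {n : ℕ}

theorem singVals_nonneg (M : Matrix (Fin n) (Fin n) ℂ) (i : Fin n) : 0 ≤ singVals M i :=
  Real.sqrt_nonneg _

theorem kyFan_eq_sum (M : Matrix (Fin n) (Fin n) ℂ) {k : ℕ} (hk : k ≤ n) :
    kyFan M k = ∑ c : Fin k, sortDesc (singVals M) (Fin.castLE hk c) :=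
  sumK_eq_sum_sortDesc (singVals_nonneg M) hk

theorem kyFan_nonneg (M : Matrix (Fin n) (Fin n) ℂ) (k : ℕ) : 0 ≤ kyFan M k := by
  rcases le_or_gt k n with hk | hk
  · rw [kyFan_eq_sum M hk]
    exact sum_nonneg fun c _ => singVals_nonneg M _
  · rw [kyFan, sumK_of_lt hk]

theorem kyFan_zero (M : Matrix (Fin n) (Fin n) ℂ) : kyFan M 0 = 0 := by
  simp [kyFan_eq_sum M (Nat.zero_le n)]

theorem kyFan_succ_sub (M : Matrix (Fin n) (Fin n) ℂ) {k : ℕ} (hk : k < n) :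
    kyFan M (k + 1) - kyFan M k = sortDesc (singVals M) ⟨k, hk⟩ := by
  rw [kyFan_eq_sum M hk, kyFan_eq_sum M hk.le, Fin.sum_univ_castSucc]
  simp [Fin.castLE_castSucc]
  rfl

end KyFan

section Bessel

variable {𝕜 E ι κ : Type*} [RCLike 𝕜] [NormedAddCommGroup E] [InnerProductSpace 𝕜 E]
  [Fintype ι] [Fintype κ]

variable (𝕜) in
def IsBessel (v : ι → E) : Prop :=
  ∀ x, ∑ i, ‖⟪v i, x⟫_𝕜‖ ^ 2 ≤ ‖x‖ ^ 2

theorem RCLike.re_mul_le (a b : 𝕜) : RCLike.re (a * b) ≤ (‖a‖ ^ 2 + ‖b‖ ^ 2) / 2 := by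
  have h := (RCLike.re_le_norm (a * b)).trans_eq (norm_mul a b)
  nlinarith [sq_nonneg (‖a‖ - ‖b‖)]

theorem Orthonormal.isBessel {v : ι → E} (hv : Orthonormal 𝕜 v) : IsBessel 𝕜 v :=
  fun x => hv.sum_inner_products_le x

theorem isBessel_of_pairwise_inner_eq_zero {u : ι → E}
    (horth : Pairwise fun i j => ⟪u i, u j⟫_𝕜 = 0) (hnorm : ∀ i, u i ≠ 0 → ‖u i‖ = 1) :
    IsBessel 𝕜 u := by
  classical
  intro x
  have hsub : Orthonormal 𝕜 fun i : {i // u i ≠ 0} => u i :=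
    ⟨fun i => hnorm i i.2, fun i j hij => horth (Subtype.coe_ne_coe.mpr hij)⟩
  rw [← Fintype.sum_subtype_add_sum_subtype fun i => u i ≠ 0]
  have hzero : ∀ i : {i // ¬ u i ≠ 0}, u i = 0 := fun i => not_not.mp i.2
  simpa [hzero] using hsub.sum_inner_products_le x

namespace IsBessel

variable {v : ι → E}

theorem comp (hv : IsBessel 𝕜 v) {e : κ → ι} (he : Function.Injective e) : IsBessel 𝕜 (v ∘ e) :=
  fun x => calc
    ∑ i, ‖⟪v (e i), x⟫_𝕜‖ ^ 2 = ∑ j ∈ univ.map ⟨e, he⟩, ‖⟪v j, x⟫_𝕜‖ ^ 2 := by simp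
    _ ≤ ∑ j, ‖⟪v j, x⟫_𝕜‖ ^ 2 := sum_le_univ_sum_of_nonneg fun _ => by positivity
    _ ≤ ‖x‖ ^ 2 := hv x

theorem neg (hv : IsBessel 𝕜 v) : IsBessel 𝕜 (-v) := fun x => by simpa using hv x

theorem norm_le_one (hv : IsBessel 𝕜 v) (i : ι) : ‖v i‖ ≤ 1 := by
  have h : ‖v i‖ ^ 2 * ‖v i‖ ^ 2 ≤ ‖v i‖ ^ 2 := calc
    ‖v i‖ ^ 2 * ‖v i‖ ^ 2 = ‖⟪v i, v i⟫_𝕜‖ ^ 2 := by rw [inner_self_eq_norm_sq_to_K]; simp; ring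
    _ ≤ ∑ j, ‖⟪v j, v i⟫_𝕜‖ ^ 2 :=
      single_le_sum (f := fun j => ‖⟪v j, v i⟫_𝕜‖ ^ 2) (fun _ _ => by positivity)
        (mem_univ i)
    _ ≤ ‖v i‖ ^ 2 := hv (v i)
  nlinarith [norm_nonneg (v i), sq_nonneg (‖v i‖ - 1)]

theorem norm_sum_smul_sq_le (hv : IsBessel 𝕜 v) (a : ι → 𝕜) :
    ‖∑ i, a i • v i‖ ^ 2 ≤ ∑ i, ‖a i‖ ^ 2 := by
  set w := ∑ i, a i • v i
  have h : ‖w‖ ^ 2 ≤ (∑ i, ‖a i‖ ^ 2 + ‖w‖ ^ 2) / 2 := calc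
    ‖w‖ ^ 2 = RCLike.re ⟪w, w⟫_𝕜 := (inner_self_eq_norm_sq w).symm
    _ = ∑ i, RCLike.re ((starRingEnd 𝕜) (a i) * ⟪v i, w⟫_𝕜) := by
      simp only [w, sum_inner, inner_smul_left, map_sum]
    _ ≤ ∑ i, (‖a i‖ ^ 2 + ‖⟪v i, w⟫_𝕜‖ ^ 2) / 2 :=
      sum_le_sum fun i _ => (RCLike.re_mul_le _ _).trans_eq (by rw [RCLike.norm_conj])
    _ ≤ (∑ i, ‖a i‖ ^ 2 + ‖w‖ ^ 2) / 2 := by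
      rw [← sum_div, sum_add_distrib]
      linarith [hv w]
  linarith

theorem synthesis {a : ι → E} {b c : κ → E} (ha : IsBessel 𝕜 a) (hb : IsBessel 𝕜 b)
    (hc : IsBessel 𝕜 c) : IsBessel 𝕜 fun i => ∑ l, ⟪c l, a i⟫_𝕜 • b l := by
  intro x
  have hadj : ∀ i, ⟪∑ l, ⟪c l, a i⟫_𝕜 • b l, x⟫_𝕜 = ⟪a i, ∑ l, ⟪b l, x⟫_𝕜 • c l⟫_𝕜 := fun i => by
    simp only [sum_inner, inner_sum, inner_smul_left, inner_smul_right, inner_conj_symm, mul_comm]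
  calc ∑ i, ‖⟪∑ l, ⟪c l, a i⟫_𝕜 • b l, x⟫_𝕜‖ ^ 2 = ∑ i, ‖⟪a i, ∑ l, ⟪b l, x⟫_𝕜 • c l⟫_𝕜‖ ^ 2 := by
        simp only [hadj]
    _ ≤ ‖∑ l, ⟪b l, x⟫_𝕜 • c l‖ ^ 2 := ha _
    _ ≤ ∑ l, ‖⟪b l, x⟫_𝕜‖ ^ 2 := hc.norm_sum_smul_sq_le _
    _ ≤ ‖x‖ ^ 2 := hb x

theorem sum_sum_norm_inner_sq_le {w : κ → E} (hw : IsBessel 𝕜 w) (hv : IsBessel 𝕜 v) :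
    ∑ l, ∑ i, ‖⟪w l, v i⟫_𝕜‖ ^ 2 ≤ Fintype.card ι := by
  rw [sum_comm]
  calc ∑ i, ∑ l, ‖⟪w l, v i⟫_𝕜‖ ^ 2 ≤ ∑ _i : ι, (1 : ℝ) := sum_le_sum fun i _ =>
        (hw (v i)).trans (pow_le_one₀ (norm_nonneg _) (hv.norm_le_one i))
    _ = Fintype.card ι := by simp

theorem sum_norm_inner_sq_le_one (hv : IsBessel 𝕜 v) {x : E} (hx : ‖x‖ ≤ 1) :
    ∑ i, ‖⟪x, v i⟫_𝕜‖ ^ 2 ≤ 1 := by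
  simp only [norm_inner_symm x]
  exact (hv x).trans (pow_le_one₀ (norm_nonneg _) hx)

end IsBessel

end Bessel

section SingularValueDecomposition

variable {n : ℕ}

theorem inner_toEuclideanLin_eigenvectorBasis (M : Matrix (Fin n) (Fin n) ℂ) (i j : Fin n) :
    ⟪M.toEuclideanLin ((Matrix.posSemidef_conjTranspose_mul_self M).1.eigenvectorBasis i),
      M.toEuclideanLin ((Matrix.posSemidef_conjTranspose_mul_self M).1.eigenvectorBasis j)⟫_ℂ =
      if i = j then ((singVals M j ^ 2 : ℝ) : ℂ) else 0 := by
  set hH := Matrix.posSemidef_conjTranspose_mul_self M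
  set b := hH.1.eigenvectorBasis
  have heig : (Mᴴ * M).toEuclideanLin (b j) = ((singVals M j ^ 2 : ℝ) : ℂ) • b j := by
    rw [singVals, Real.sq_sqrt (hH.eigenvalues_nonneg j)]
    ext a
    simpa [Complex.real_smul] using congrFun (hH.1.mulVec_eigenvectorBasis j) a
  have hmul : Mᴴ.toEuclideanLin (M.toEuclideanLin (b j)) = (Mᴴ * M).toEuclideanLin (b j) := by
    simp
  rw [← LinearMap.adjoint_inner_right, ← Matrix.toEuclideanLin_conjTranspose_eq_adjoint, hmul,
    heig, inner_smul_right, orthonormal_iff_ite.mp b.orthonormal]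
  simp

structure SVD (M : Matrix (Fin n) (Fin n) ℂ) where
  sv : Fin n → ℝ
  u : Fin n → EuclideanSpace ℂ (Fin n)
  v : OrthonormalBasis (Fin n) ℂ (EuclideanSpace ℂ (Fin n))
  sv_eq : sv = sortDesc (singVals M)
  isBessel_u : IsBessel ℂ u
  inner_u_self : ∀ j, sv j ≠ 0 → ⟪u j, u j⟫_ℂ = 1
  toEuclideanLin_v : ∀ j, M.toEuclideanLin (v j) = (sv j : ℂ) • u j

theorem SVD.nonempty (M : Matrix (Fin n) (Fin n) ℂ) : Nonempty (SVD M) := by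
  set π : Equiv.Perm (Fin n) := Fin.revPerm.trans (Tuple.sort (singVals M))
  set v := (Matrix.posSemidef_conjTranspose_mul_self M).1.eigenvectorBasis.reindex π.symm
  set sv := sortDesc (singVals M)
  set u : Fin n → EuclideanSpace ℂ (Fin n) := fun j => (sv j : ℂ)⁻¹ • M.toEuclideanLin (v j)
  have hMv : ∀ i j, ⟪M.toEuclideanLin (v i), M.toEuclideanLin (v j)⟫_ℂ =
      if i = j then ((sv j ^ 2 : ℝ) : ℂ) else 0 := fun i j => by
    simp [v, sv, sortDesc_eq_comp, inner_toEuclideanLin_eigenvectorBasis, π]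
  have hsv0 : ∀ j, 0 ≤ sv j := fun j => singVals_nonneg M _
  have hnormMv : ∀ j, ‖M.toEuclideanLin (v j)‖ = sv j := fun j => by
    have h := hMv j j
    rw [if_pos rfl, inner_self_eq_norm_sq_to_K] at h
    exact (sq_eq_sq₀ (norm_nonneg _) (hsv0 j)).mp
      (Complex.ofReal_injective (by push_cast at h ⊢; exact h))
  have hnorm_u : ∀ j, sv j ≠ 0 → ‖u j‖ = 1 := fun j hj => by
    simp [u, norm_smul, hnormMv, abs_of_nonneg (hsv0 j), hj]
  refine ⟨⟨sv, u, v, rfl, isBessel_of_pairwise_inner_eq_zero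
    (fun i j hij => by simp [u, inner_smul_left, inner_smul_right, hMv, hij])
    fun i hi => hnorm_u i fun h => hi (by simp [u, h]), fun j hj => ?_, fun j => ?_⟩⟩
  · rw [inner_self_eq_norm_sq_to_K, hnorm_u j hj]
    simp
  · by_cases hj : sv j = 0
    · simp [← norm_eq_zero, hnormMv, hj]
    · simp [u, smul_smul, hj]

end SingularValueDecomposition

namespace SVD

variable {n : ℕ} {M : Matrix (Fin n) (Fin n) ℂ} (P : SVD M)

theorem sv_nonneg (j : Fin n) : 0 ≤ P.sv j := by
  rw [P.sv_eq]
  exact singVals_nonneg M _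

theorem antitone_sv : Antitone P.sv := P.sv_eq ▸ antitone_sortDesc _

theorem kyFan_eq {k : ℕ} (hk : k ≤ n) : kyFan M k = ∑ c : Fin k, P.sv (Fin.castLE hk c) := by
  rw [P.sv_eq]
  exact kyFan_eq_sum M hk

theorem toEuclideanLin_apply (x : EuclideanSpace ℂ (Fin n)) :
    M.toEuclideanLin x = ∑ j, (P.sv j : ℂ) • ⟪P.v j, x⟫_ℂ • P.u j := by
  conv_lhs => rw [← P.v.sum_repr' x]
  simp only [map_sum, map_smul, P.toEuclideanLin_v, smul_comm (⟪_, x⟫_ℂ)]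

theorem re_inner_u_toEuclideanLin_v (j : Fin n) :
    RCLike.re ⟪P.u j, M.toEuclideanLin (P.v j)⟫_ℂ = P.sv j := by
  by_cases hj : P.sv j = 0
  · simp [P.toEuclideanLin_v, hj]
  · rw [P.toEuclideanLin_v, inner_smul_right, P.inner_u_self j hj]
    simp

theorem kyFan_eq_sum_re_inner {k : ℕ} (hk : k ≤ n) :
    kyFan M k = ∑ c : Fin k,
      RCLike.re ⟪P.u (Fin.castLE hk c), M.toEuclideanLin (P.v (Fin.castLE hk c))⟫_ℂ := by
  simp only [re_inner_u_toEuclideanLin_v, P.kyFan_eq hk]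

end SVD

section KyFanBounds

variable {n : ℕ} {ι κ : Type*} [Fintype ι] [Fintype κ]

theorem sum_re_inner_toEuclideanLin_le_kyFan (M : Matrix (Fin n) (Fin n) ℂ)
    {y z : ι → EuclideanSpace ℂ (Fin n)} (hy : IsBessel ℂ y) (hz : IsBessel ℂ z)
    (hι : Fintype.card ι ≤ n) :
    ∑ i, RCLike.re ⟪z i, M.toEuclideanLin (y i)⟫_ℂ ≤ kyFan M (Fintype.card ι) := by
  obtain ⟨P⟩ := SVD.nonempty M
  -- AM-GM against the SVD of `M`: direction `j` gets a weight `t j ∈ [0, 1]`, with `∑ t ≤ card ι`.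
  set t : Fin n → ℝ := fun j => (∑ i, ‖⟪P.v j, y i⟫_ℂ‖ ^ 2 + ∑ i, ‖⟪P.u j, z i⟫_ℂ‖ ^ 2) / 2
  have hv1 : ∀ j, ∑ i, ‖⟪P.v j, y i⟫_ℂ‖ ^ 2 ≤ 1 := fun j =>
    hy.sum_norm_inner_sq_le_one (P.v.orthonormal.1 j).le
  have hu1 : ∀ j, ∑ i, ‖⟪P.u j, z i⟫_ℂ‖ ^ 2 ≤ 1 := fun j =>
    hz.sum_norm_inner_sq_le_one (P.isBessel_u.norm_le_one j)
  have htotal : ∑ j, t j ≤ Fintype.card ι := by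
    have hv := P.v.orthonormal.isBessel.sum_sum_norm_inner_sq_le hy
    have hu := P.isBessel_u.sum_sum_norm_inner_sq_le hz
    simp only [t, ← sum_div, sum_add_distrib]
    linarith
  calc ∑ i, RCLike.re ⟪z i, M.toEuclideanLin (y i)⟫_ℂ
      = ∑ j, P.sv j * ∑ i, RCLike.re (⟪P.v j, y i⟫_ℂ * ⟪z i, P.u j⟫_ℂ) := by
        simp only [P.toEuclideanLin_apply, inner_sum, inner_smul_right, map_sum,
          RCLike.re_to_complex, Complex.re_ofReal_mul, mul_sum]
        exact sum_comm
    _ ≤ ∑ j, P.sv j * t j := by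
        refine sum_le_sum fun j _ => mul_le_mul_of_nonneg_left ?_ (P.sv_nonneg j)
        calc ∑ i, RCLike.re (⟪P.v j, y i⟫_ℂ * ⟪z i, P.u j⟫_ℂ)
            ≤ ∑ i, (‖⟪P.v j, y i⟫_ℂ‖ ^ 2 + ‖⟪P.u j, z i⟫_ℂ‖ ^ 2) / 2 :=
              sum_le_sum fun i _ =>
                (RCLike.re_mul_le _ _).trans_eq (by rw [norm_inner_symm (z i)])
          _ = t j := by simp only [t, ← sum_div, sum_add_distrib]
    _ ≤ ∑ c : Fin (Fintype.card ι), P.sv (Fin.castLE hι c) :=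
        sum_mul_le_sum_castLE P.antitone_sv P.sv_nonneg (fun j => by simp only [t]; positivity)
          (fun j => by simp only [t]; linarith [hv1 j, hu1 j]) hι htotal
    _ = kyFan M (Fintype.card ι) := (P.kyFan_eq hι).symm

theorem sum_sum_re_inner_mul_inner_le_kyFan (M : Matrix (Fin n) (Fin n) ℂ)
    {y z : ι → EuclideanSpace ℂ (Fin n)} {p q : κ → EuclideanSpace ℂ (Fin n)}
    (hy : IsBessel ℂ y) (hz : IsBessel ℂ z) (hp : IsBessel ℂ p) (hq : IsBessel ℂ q)
    (hn : min (Fintype.card ι) (Fintype.card κ) ≤ n) :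
    ∑ i, ∑ l, RCLike.re (⟪q l, y i⟫_ℂ * ⟪z i, M.toEuclideanLin (p l)⟫_ℂ) ≤
      kyFan M (min (Fintype.card ι) (Fintype.card κ)) := by
  rcases le_total (Fintype.card ι) (Fintype.card κ) with h | h
  · rw [min_eq_left h] at hn ⊢
    convert sum_re_inner_toEuclideanLin_le_kyFan M (hy.synthesis hp hq) hz hn using 2 with i
    simp only [map_sum, map_smul, inner_sum, inner_smul_right]
  · rw [min_eq_right h] at hn ⊢
    rw [sum_comm]
    convert sum_re_inner_toEuclideanLin_le_kyFan M hp (hq.synthesis hz hy) hn using 2 with l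
    simp only [sum_inner, inner_smul_left, inner_conj_symm, map_sum]

end KyFanBounds

section Discrepancy

variable {n : ℕ} (A B : Matrix (Fin n) (Fin n) ℂ)

theorem discNorm2_le (k : ℕ) (α : ℂ) :
    discNorm2 A B k ≤ (kyFan (A - α • 1) k + kyFan (B - α • 1) k) / 2 :=
  csInf_le ⟨0, by
    rintro x ⟨α, rfl⟩
    have := kyFan_nonneg (A - α • 1) k
    have := kyFan_nonneg (B - α • 1) k
    positivity⟩ ⟨α, rfl⟩

theorem le_discNorm2 {c : ℝ} (k : ℕ)
    (h : ∀ α : ℂ, c ≤ (kyFan (A - α • 1) k + kyFan (B - α • 1) k) / 2) :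
    c ≤ discNorm2 A B k :=
  le_csInf ⟨_, 0, rfl⟩ (by rintro x ⟨α, rfl⟩; exact h α)

theorem discNorm2_zero : discNorm2 A B 0 = 0 :=
  le_antisymm ((discNorm2_le A B 0 0).trans_eq (by simp [kyFan_zero]))
    (le_discNorm2 A B 0 fun α => by simp [kyFan_zero])

theorem discNorm2_le_succ {k : ℕ} (hk : k < n) : discNorm2 A B k ≤ discNorm2 A B (k + 1) :=
  le_discNorm2 A B _ fun α => by
    have hA := kyFan_succ_sub (A - α • 1) hk
    have hB := kyFan_succ_sub (B - α • 1) hk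
    have h0 : ∀ M : Matrix (Fin n) (Fin n) ℂ, 0 ≤ sortDesc (singVals M) ⟨k, hk⟩ :=
      fun M => singVals_nonneg M _
    linarith [discNorm2_le A B k α, h0 (A - α • 1), h0 (B - α • 1)]

theorem discNorm2_add_two_add_le {k : ℕ} (hk : k + 2 ≤ n) :
    discNorm2 A B (k + 2) + discNorm2 A B k ≤ 2 * discNorm2 A B (k + 1) := by
  suffices h : (discNorm2 A B (k + 2) + discNorm2 A B k) / 2 ≤ discNorm2 A B (k + 1) by linarith
  refine le_discNorm2 A B _ fun α => ?_
  have hstep : ∀ M : Matrix (Fin n) (Fin n) ℂ,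
      kyFan M (k + 2) - kyFan M (k + 1) ≤ kyFan M (k + 1) - kyFan M k := fun M => by
    rw [kyFan_succ_sub M (by omega), kyFan_succ_sub M (by omega)]
    exact antitone_sortDesc _ (Fin.mk_le_mk.mpr k.le_succ)
  linarith [discNorm2_le A B (k + 2) α, discNorm2_le A B k α, hstep (A - α • 1),
    hstep (B - α • 1)]

theorem discVals2_nonneg (i : Fin n) : 0 ≤ discVals2 A B i :=
  sub_nonneg.mpr (discNorm2_le_succ A B i.2)

theorem antitone_discVals2 : Antitone (discVals2 A B) := by
  cases n with
  | zero => exact fun i => i.elim0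
  | succ n =>
    refine Fin.antitone_iff_succ_le.mpr fun i => ?_
    have := discNorm2_add_two_add_le A B (k := i) (by omega)
    simp only [discVals2, Fin.val_succ, Fin.val_castSucc]
    linarith

end Discrepancy

section Commutator

variable {n : ℕ} {ι κ : Type*} [Fintype ι] [Fintype κ] (A B : Matrix (Fin n) (Fin n) ℂ)

/-- `∑ i, Re ⟪z i, (A R - R B) (y i)⟫` for the rank-one map `R x = ⟪q, x⟫ • p`. -/
noncomputable def commutatorPairing (y z : ι → EuclideanSpace ℂ (Fin n))
    (p q : EuclideanSpace ℂ (Fin n)) : ℝ :=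
  ∑ i, RCLike.re (⟪q, y i⟫_ℂ * ⟪z i, A.toEuclideanLin p⟫_ℂ -
    ⟪z i, p⟫_ℂ * ⟪q, B.toEuclideanLin (y i)⟫_ℂ)

theorem sum_re_inner_commutator_eq {X : Matrix (Fin n) (Fin n) ℂ} (P : SVD X)
    (y z : ι → EuclideanSpace ℂ (Fin n)) :
    ∑ i, RCLike.re ⟪z i, (A * X - X * B).toEuclideanLin (y i)⟫_ℂ =
      ∑ j, P.sv j * commutatorPairing A B y z (P.u j) (P.v j) := by
  simp only [commutatorPairing, mul_sum]
  rw [sum_comm]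
  refine sum_congr rfl fun i _ => ?_
  simp only [map_sub, LinearMap.sub_apply, Matrix.toLpLin_mul_same, LinearMap.comp_apply,
    P.toEuclideanLin_apply, map_sum, map_smul, inner_sub_right, inner_sum, inner_smul_right,
    ← sum_sub_distrib]
  refine sum_congr rfl fun j _ => ?_
  simp only [RCLike.re_to_complex, Complex.re_ofReal_mul, ← mul_sub, mul_comm ⟪z i, P.u j⟫_ℂ]

theorem commutatorPairing_sub_smul_one (α : ℂ) (y z : ι → EuclideanSpace ℂ (Fin n))
    (p q : EuclideanSpace ℂ (Fin n)) :
    commutatorPairing (A - α • 1) (B - α • 1) y z p q = commutatorPairing A B y z p q := by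
  refine sum_congr rfl fun i _ => congrArg RCLike.re ?_
  simp only [map_sub, map_smul, LinearMap.sub_apply, LinearMap.smul_apply,
    Matrix.toLpLin_one, LinearMap.id_apply, inner_sub_right, inner_smul_right]
  ring

theorem sum_commutatorPairing_le_kyFan_add_kyFan {y z : ι → EuclideanSpace ℂ (Fin n)}
    {p q : κ → EuclideanSpace ℂ (Fin n)} (hy : IsBessel ℂ y) (hz : IsBessel ℂ z)
    (hp : IsBessel ℂ p) (hq : IsBessel ℂ q) (hn : min (Fintype.card ι) (Fintype.card κ) ≤ n) :
    ∑ l, commutatorPairing A B y z (p l) (q l) ≤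
      kyFan A (min (Fintype.card ι) (Fintype.card κ)) +
        kyFan B (min (Fintype.card ι) (Fintype.card κ)) := by
  have hA := sum_sum_re_inner_mul_inner_le_kyFan A hy hz hp hq hn
  have hB := sum_sum_re_inner_mul_inner_le_kyFan B hp hq.neg hy hz (by rwa [min_comm])
  rw [sum_comm] at hA
  rw [min_comm] at hB
  simp only [Pi.neg_apply, inner_neg_left, mul_neg, map_neg, sum_neg_distrib] at hB
  simp only [commutatorPairing, map_sub, sum_sub_distrib]
  linarith

theorem sum_commutatorPairing_le_two_mul_discNorm2 {y z : ι → EuclideanSpace ℂ (Fin n)}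
    {p q : κ → EuclideanSpace ℂ (Fin n)} (hy : IsBessel ℂ y) (hz : IsBessel ℂ z)
    (hp : IsBessel ℂ p) (hq : IsBessel ℂ q) (hn : min (Fintype.card ι) (Fintype.card κ) ≤ n) :
    ∑ l, commutatorPairing A B y z (p l) (q l) ≤
      2 * discNorm2 A B (min (Fintype.card ι) (Fintype.card κ)) := by
  have h := le_discNorm2 A B (min (Fintype.card ι) (Fintype.card κ))
    (c := (∑ l, commutatorPairing A B y z (p l) (q l)) / 2) fun α => by
      simp only [← commutatorPairing_sub_smul_one A B α]
      linarith [sum_commutatorPairing_le_kyFan_add_kyFan (A - α • 1) (B - α • 1) hy hz hp hq hn]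
  linarith

theorem SVD.sum_commutatorPairing_castLE_le {X : Matrix (Fin n) (Fin n) ℂ} (Q : SVD X) {k r : ℕ}
    {y z : Fin k → EuclideanSpace ℂ (Fin n)} (hy : IsBessel ℂ y) (hz : IsBessel ℂ z)
    (hk : k ≤ n) (hr : r ≤ n) :
    ∑ d : Fin r, commutatorPairing A B y z (Q.u (Fin.castLE hr d)) (Q.v (Fin.castLE hr d)) ≤
      2 * discNorm2 A B (min k r) := by
  simpa using sum_commutatorPairing_le_two_mul_discNorm2 A B hy hz
    (Q.isBessel_u.comp (Fin.castLE_injective hr))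
    (Q.v.orthonormal.isBessel.comp (Fin.castLE_injective hr)) (by simp; omega)

end Commutator

/-- Twice `discVals2 A B`, cut off after index `k`, written so that its prefix sums telescope. -/
noncomputable def truncDiscVals2 {n : ℕ} (A B : Matrix (Fin n) (Fin n) ℂ) (k : ℕ) (j : Fin n) : ℝ :=
  2 * discNorm2 A B (min k (j + 1)) - 2 * discNorm2 A B (min k j)

section Truncation

variable {n : ℕ} (A B : Matrix (Fin n) (Fin n) ℂ) {k : ℕ}

theorem sum_castLE_truncDiscVals2 {r : ℕ} (hr : r ≤ n) :
    ∑ d : Fin r, truncDiscVals2 A B k (Fin.castLE hr d) = 2 * discNorm2 A B (min k r) := by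
  simp only [truncDiscVals2, Fin.val_castLE]
  rw [Fin.sum_univ_eq_sum_range (fun i => 2 * discNorm2 A B (min k (i + 1)) -
      2 * discNorm2 A B (min k i)), sum_range_sub (fun i => 2 * discNorm2 A B (min k i))]
  simp [discNorm2_zero]

theorem sum_mul_truncDiscVals2 (s : Fin n → ℝ) (hk : k ≤ n) :
    ∑ j, s j * truncDiscVals2 A B k j =
      ∑ c : Fin k, s (Fin.castLE hk c) * (2 * discVals2 A B (Fin.castLE hk c)) := by
  rw [sum_castLE_eq_sum_ite hk fun j => s j * (2 * discVals2 A B j)]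
  refine sum_congr rfl fun j _ => ?_
  split_ifs with hj
  · simp [truncDiscVals2, discVals2, min_eq_right (Nat.succ_le_of_lt hj), min_eq_right hj.le,
      mul_sub]
  · simp [truncDiscVals2, min_eq_left (not_lt.mp hj),
      min_eq_left (Nat.le_succ_of_le (not_lt.mp hj))]

theorem sumK_two_mul_discVals2_mul {X : Matrix (Fin n) (Fin n) ℂ} (P : SVD X) (hk : k ≤ n) :
    sumK (fun i => 2 * sortDesc (discVals2 A B) i * sortDesc (singVals X) i) k =
      ∑ c : Fin k, P.sv (Fin.castLE hk c) * (2 * discVals2 A B (Fin.castLE hk c)) := by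
  have hanti : Antitone fun i => 2 * discVals2 A B i * P.sv i := fun i j hij =>
    mul_le_mul (by linarith [antitone_discVals2 A B hij]) (P.antitone_sv hij) (P.sv_nonneg j)
      (by linarith [discVals2_nonneg A B i])
  have hnonneg : ∀ i, 0 ≤ 2 * discVals2 A B i * P.sv i := fun i => by
    have := discVals2_nonneg A B i
    have := P.sv_nonneg i
    positivity
  rw [sortDesc_eq_self (antitone_discVals2 A B), ← P.sv_eq, sumK_eq_sum_castLE hanti hnonneg hk]
  exact sum_congr rfl fun c _ => by ring

end Truncation

/-- σ(AX - XB) ≺_w 2 δ(A,B) σ(X). -/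
theorem singVals_generalized_commutator (n : ℕ) (A B X : Matrix (Fin n) (Fin n) ℂ) :
    WeakMaj (singVals (A * X - X * B))
      (fun i => 2 * sortDesc (discVals2 A B) i * sortDesc (singVals X) i) := by
  intro k
  rcases le_or_gt k n with hk | hk
  swap
  · rw [sumK_of_lt hk, sumK_of_lt hk]
  obtain ⟨P⟩ := SVD.nonempty (A * X - X * B)
  obtain ⟨Q⟩ := SVD.nonempty X
  set y := P.v ∘ Fin.castLE hk
  set z := P.u ∘ Fin.castLE hk
  have hy : IsBessel ℂ y := P.v.orthonormal.isBessel.comp (Fin.castLE_injective hk)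
  have hz : IsBessel ℂ z := P.isBessel_u.comp (Fin.castLE_injective hk)
  calc kyFan (A * X - X * B) k
      = ∑ c, RCLike.re ⟪z c, (A * X - X * B).toEuclideanLin (y c)⟫_ℂ :=
        P.kyFan_eq_sum_re_inner hk
    _ = ∑ j, Q.sv j * commutatorPairing A B y z (Q.u j) (Q.v j) :=
        sum_re_inner_commutator_eq A B Q y z
    _ ≤ ∑ j, Q.sv j * truncDiscVals2 A B k j :=
        sum_mul_le_sum_mul_of_prefix_sum_le Q.antitone_sv Q.sv_nonneg fun r hr =>
          (Q.sum_commutatorPairing_castLE_le A B hy hz hk hr).trans_eq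
            (sum_castLE_truncDiscVals2 A B hr).symm
    _ = ∑ c : Fin k, Q.sv (Fin.castLE hk c) * (2 * discVals2 A B (Fin.castLE hk c)) :=
        sum_mul_truncDiscVals2 A B Q.sv hk
    _ = _ := (sumK_two_mul_discVals2_mul A B Q hk).symm
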